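/- The Jacobson radical of the Taft algebra H_n(q) equals the two-sided ideal H_n(q)h generated by h; moreover J(H_n(q))^n = 0 while J(H_n(q))^{n−1} ≠ 0 (so the Loewy length of H_n(q) is n). -/

import Mathlib

open scoped TensorProduct

/-- The defining relations of the Taft algebra: `g^n = 1`, `h^n = 0`, `hg = q·gh`,
where `g` (resp. `h`) is the free generator indexed by `true` (resp. `false`). -/
inductive TaftRel (k : Type) [Field k] (q : k) (n : ℕ) :
    FreeAlgebra k Bool → FreeAlgebra k Bool → Prop
  | g_pow : TaftRel k q n (FreeAlgebra.ι k true ^ n) 1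
  | h_pow : TaftRel k q n (FreeAlgebra.ι k false ^ n) 0
  | h_g : TaftRel k q n (FreeAlgebra.ι k false * FreeAlgebra.ι k true)
      (q • (FreeAlgebra.ι k true * FreeAlgebra.ι k false))

/-- The Taft algebra `H_n(q)`: the `k`-algebra generated by `g, h` subject to
`g^n = 1`, `h^n = 0`, `hg = q·gh`. -/
abbrev TaftAlgebra (k : Type) [Field k] (q : k) (n : ℕ) : Type :=
  RingQuot (TaftRel k q n)

/-- The generator `g` of the Taft algebra. -/
noncomputable def taftG (k : Type) [Field k] (q : k) (n : ℕ) : TaftAlgebra k q n :=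
  RingQuot.mkAlgHom k (TaftRel k q n) (FreeAlgebra.ι k true)

/-- The generator `h` of the Taft algebra. -/
noncomputable def taftH (k : Type) [Field k] (q : k) (n : ℕ) : TaftAlgebra k q n :=
  RingQuot.mkAlgHom k (TaftRel k q n) (FreeAlgebra.ι k false)

/-!
Since `hg = q gh`, the element `h` satisfies `hH ⊆ Hh`; so `Hh` is a two-sided ideal, a product
of `m` of its elements lies in `H h^m`, and `h^n = 0` makes it a nil ideal, hence contained in
the radical. Conversely every `x` is congruent to some `p(g)` modulo `Hh`. For each `n`-th root
of unity `u`, the character `g ↦ u, h ↦ 0` kills the radical and `Hh`; so if `x` is in the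
radical, then `p` vanishes at all `n` distinct `n`-th roots of unity, its remainder modulo
`X^n - 1` is zero, and `p(g) = 0` because `g^n = 1`. Finally `h^{n-1} ≠ 0` is seen in the
`n`-dimensional representation where `g` acts diagonally by `q^i` and `h` as a truncated shift.
-/

open Polynomial

namespace Ideal

variable {R : Type*} [Ring R]

theorem le_jacobson_bot_of_forall_isNilpotent {I : Ideal R}
    (hI : ∀ a ∈ I, IsNilpotent a) : I ≤ (⊥ : Ideal R).jacobson := by
  intro a ha
  refine mem_jacobson_iff.2 fun y => ?_
  obtain ⟨u, hu⟩ := (hI _ (I.mul_mem_left y ha)).isUnit_add_one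
  refine ⟨↑u⁻¹, ?_⟩
  rw [mem_bot, mul_assoc, sub_eq_zero, ← mul_add_one, ← hu, Units.inv_mul]

theorem map_eq_zero_of_mem_jacobson_bot {K : Type*} [DivisionRing K] (f : R →+* K)
    (hf : Function.Surjective f) {a : R} (ha : a ∈ (⊥ : Ideal R).jacobson) : f a = 0 :=
  mem_sInf.1 ha ⟨bot_le, RingHom.ker_isMaximal_of_surjective f hf⟩

theorem mul_mem_span_singleton_of_forall_exists_mul_eq {x : R}
    (hx : ∀ b : R, ∃ v, x * b = v * x) {a : R} (ha : a ∈ span {x}) (b : R) :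
    a * b ∈ span {x} := by
  obtain ⟨r, rfl⟩ := mem_span_singleton'.1 ha
  obtain ⟨v, hv⟩ := hx b
  rw [mul_assoc, hv, ← mul_assoc]
  exact mul_mem_left _ _ (mem_span_singleton_self x)

theorem exists_list_prod_eq_mul_pow_of_forall_exists_mul_eq {x : R}
    (hx : ∀ b : R, ∃ v, x * b = v * x) (l : List R) (hl : ∀ a ∈ l, a ∈ span {x}) :
    ∃ w, l.prod = w * x ^ l.length := by
  induction l with
  | nil => exact ⟨1, by simp⟩
  | cons a l ih =>
    obtain ⟨w, hw⟩ := ih fun b hb => hl b (List.mem_cons_of_mem a hb)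
    obtain ⟨r, rfl⟩ := mem_span_singleton'.1 (hl _ List.mem_cons_self)
    obtain ⟨v, hv⟩ := hx w
    refine ⟨r * v, ?_⟩
    rw [List.prod_cons, hw, List.length_cons, pow_succ', ← mul_assoc, mul_assoc r, hv]
    simp only [mul_assoc]

theorem span_singleton_le_jacobson_bot_of_forall_exists_mul_eq {x : R}
    (hx : ∀ b : R, ∃ v, x * b = v * x) (hnil : IsNilpotent x) :
    span {x} ≤ (⊥ : Ideal R).jacobson := by
  refine le_jacobson_bot_of_forall_isNilpotent fun a ha => ?_
  obtain ⟨m, hm⟩ := hnil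
  obtain ⟨w, hw⟩ := exists_list_prod_eq_mul_pow_of_forall_exists_mul_eq hx
    (List.replicate m a) fun b hb => List.eq_of_mem_replicate hb ▸ ha
  rw [List.prod_replicate, List.length_replicate, hm, mul_zero] at hw
  exact ⟨m, hw⟩

end Ideal

theorem Polynomial.aeval_eq_zero_of_forall_eval_nthRootsFinset {K A : Type*} [CommRing K]
    [IsDomain K] [Ring A] [Algebra K A] {ζ : K} {n : ℕ} (hζ : IsPrimitiveRoot ζ n) (hn : n ≠ 0)
    {a : A} (ha : a ^ n = 1) {p : K[X]} (hp : ∀ u ∈ nthRootsFinset n (1 : K), p.eval u = 0) :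
    aeval a p = 0 := by
  have hmonic : (X ^ n - 1 : K[X]).Monic := by simpa using monic_X_pow_sub_C (1 : K) hn
  have hdeg : (X ^ n - 1 : K[X]).natDegree = n := by
    simpa using natDegree_X_pow_sub_C (n := n) (r := (1 : K))
  suffices p %ₘ (X ^ n - 1) = 0 by
    rw [← aeval_modByMonic_eq_self_of_root (q := X ^ n - 1) (by simp [ha]), this, map_zero]
  refine eq_zero_of_natDegree_lt_card_of_eval_eq_zero' _ (nthRootsFinset n (1 : K))
    (fun u hu => ?_) ?_
  · have hu' := (mem_nthRootsFinset (Nat.pos_of_ne_zero hn) (1 : K)).1 hu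
    simpa [hp u hu] using aeval_modByMonic_eq_self_of_root (p := p) (x := u)
      (by simp [hu'] : aeval u (X ^ n - 1 : K[X]) = 0)
  · rw [hζ.card_nthRootsFinset]
    refine (natDegree_modByMonic_lt _ hmonic fun h1 => hn ?_).trans_eq hdeg
    rw [← hdeg, h1, natDegree_one]

namespace TaftAlgebra

variable {k : Type} [Field k] {q : k} {n : ℕ}

theorem taftG_pow : taftG k q n ^ n = 1 := by
  simpa [taftG] using RingQuot.mkAlgHom_rel k (TaftRel.g_pow (k := k) (q := q) (n := n))

theorem taftH_pow : taftH k q n ^ n = 0 := by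
  simpa [taftH] using RingQuot.mkAlgHom_rel k (TaftRel.h_pow (k := k) (q := q) (n := n))

theorem taftH_mul_taftG : taftH k q n * taftG k q n = q • (taftG k q n * taftH k q n) := by
  simpa [taftG, taftH] using RingQuot.mkAlgHom_rel k (TaftRel.h_g (k := k) (q := q) (n := n))

@[elab_as_elim]
theorem induction_on {P : TaftAlgebra k q n → Prop} (x : TaftAlgebra k q n)
    (algebraMap : ∀ r : k, P (algebraMap k (TaftAlgebra k q n) r))
    (g : P (taftG k q n)) (h : P (taftH k q n))
    (mul : ∀ x y, P x → P y → P (x * y)) (add : ∀ x y, P x → P y → P (x + y)) : P x := by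
  obtain ⟨w, rfl⟩ := RingQuot.mkAlgHom_surjective k (TaftRel k q n) x
  induction w using FreeAlgebra.induction with
  | grade0 r => simpa using algebraMap r
  | grade1 b => cases b <;> assumption
  | mul a b ha hb => rw [map_mul]; exact mul _ _ ha hb
  | add a b ha hb => rw [map_add]; exact add _ _ ha hb

noncomputable def lift {A : Type*} [Semiring A] [Algebra k A] (a b : A) (ha : a ^ n = 1)
    (hb : b ^ n = 0) (hba : b * a = q • (a * b)) : TaftAlgebra k q n →ₐ[k] A :=
  RingQuot.liftAlgHom k ⟨FreeAlgebra.lift k fun i => if i then a else b, by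
    rintro _ _ ⟨⟩ <;> simpa⟩

section lift

variable {A : Type*} [Semiring A] [Algebra k A] {a b : A} (ha : a ^ n = 1) (hb : b ^ n = 0)
  (hba : b * a = q • (a * b))

@[simp]
theorem lift_taftG : lift a b ha hb hba (taftG k q n) = a := by
  simp [lift, taftG]

@[simp]
theorem lift_taftH : lift a b ha hb hba (taftH k q n) = b := by
  simp [lift, taftH]

end lift

theorem exists_taftH_mul_eq_mul_taftH (b : TaftAlgebra k q n) :
    ∃ v, taftH k q n * b = v * taftH k q n := by
  induction b using induction_on with
  | algebraMap r => exact ⟨algebraMap k _ r, (Algebra.commutes r _).symm⟩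
  | g => exact ⟨q • taftG k q n, by rw [taftH_mul_taftG, smul_mul_assoc]⟩
  | h => exact ⟨taftH k q n, rfl⟩
  | mul x y hx hy =>
    obtain ⟨v, hv⟩ := hx
    obtain ⟨w, hw⟩ := hy
    exact ⟨v * w, by rw [← mul_assoc, hv, mul_assoc, hw, mul_assoc]⟩
  | add x y hx hy =>
    obtain ⟨v, hv⟩ := hx
    obtain ⟨w, hw⟩ := hy
    exact ⟨v + w, by rw [mul_add, hv, hw, add_mul]⟩

theorem exists_sub_aeval_taftG_mem_span_taftH (x : TaftAlgebra k q n) :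
    ∃ p : k[X], x - aeval (taftG k q n) p ∈ Ideal.span {taftH k q n} := by
  induction x using induction_on with
  | algebraMap r => exact ⟨C r, by simp⟩
  | g => exact ⟨X, by simp⟩
  | h => exact ⟨0, by simp⟩
  | mul x y hx hy =>
    obtain ⟨p, hp⟩ := hx
    obtain ⟨p', hp'⟩ := hy
    refine ⟨p * p', ?_⟩
    have key : x * y - aeval (taftG k q n) (p * p') =
        (x - aeval (taftG k q n) p) * y +
          aeval (taftG k q n) p * (y - aeval (taftG k q n) p') := by
      simp only [map_mul, sub_mul, mul_sub]
      abel
    rw [key]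
    exact Ideal.add_mem _
      (Ideal.mul_mem_span_singleton_of_forall_exists_mul_eq exists_taftH_mul_eq_mul_taftH hp y)
      (Ideal.mul_mem_left _ _ hp')
  | add x y hx hy =>
    obtain ⟨p, hp⟩ := hx
    obtain ⟨p', hp'⟩ := hy
    refine ⟨p + p', ?_⟩
    rw [map_add, add_sub_add_comm]
    exact Ideal.add_mem _ hp hp'

theorem span_taftH_le_jacobson :
    Ideal.span {taftH k q n} ≤ (⊥ : Ideal (TaftAlgebra k q n)).jacobson :=
  Ideal.span_singleton_le_jacobson_bot_of_forall_exists_mul_eq exists_taftH_mul_eq_mul_taftH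
    ⟨n, taftH_pow⟩

theorem jacobson_le_span_taftH (hq : IsPrimitiveRoot q n) (hn : n ≠ 0) :
    (⊥ : Ideal (TaftAlgebra k q n)).jacobson ≤ Ideal.span {taftH k q n} := by
  intro x hx
  obtain ⟨p, hp⟩ := exists_sub_aeval_taftG_mem_span_taftH x
  suffices aeval (taftG k q n) p = 0 by rwa [this, sub_zero] at hp
  refine aeval_eq_zero_of_forall_eval_nthRootsFinset hq hn taftG_pow fun u hu => ?_
  rw [mem_nthRootsFinset (Nat.pos_of_ne_zero hn)] at hu
  let χ := lift (A := k) (q := q) u 0 hu (zero_pow hn) (by simp)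
  have hχx : χ x = 0 := Ideal.map_eq_zero_of_mem_jacobson_bot χ.toRingHom
    (fun c => ⟨algebraMap k _ c, χ.commutes c⟩) hx
  have hχh : Ideal.span {taftH k q n} ≤ RingHom.ker χ := by simp [Ideal.span_le, χ]
  have hχp := RingHom.mem_ker.1 (hχh hp)
  rw [map_sub, hχx, zero_sub, neg_eq_zero, ← aeval_algHom_apply, lift_taftG] at hχp
  simpa using hχp

variable (k n) in
noncomputable def truncShift : Module.End k (Fin n → k) where
  toFun v i := if h : (i : ℕ) + 1 < n then v ⟨i + 1, h⟩ else 0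
  map_add' v w := funext fun i => by by_cases h : (i : ℕ) + 1 < n <;> simp [h]
  map_smul' c v := funext fun i => by by_cases h : (i : ℕ) + 1 < n <;> simp [h]

theorem truncShift_apply (v : Fin n → k) (i : Fin n) :
    truncShift k n v i = if h : (i : ℕ) + 1 < n then v ⟨i + 1, h⟩ else 0 :=
  rfl

theorem truncShift_pow_apply (m : ℕ) (v : Fin n → k) (i : Fin n) :
    (truncShift k n ^ m) v i = if h : (i : ℕ) + m < n then v ⟨i + m, h⟩ else 0 := by
  induction m generalizing v with
  | zero => simp
  | succ m ih =>
    simp only [pow_succ, Module.End.mul_apply, ih, truncShift_apply, ← add_assoc]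
    split_ifs <;> first | rfl | omega

theorem taftH_pow_pred_ne_zero (hn : n ≠ 0) (hq : q ^ n = 1) : taftH k q n ^ (n - 1) ≠ 0 := by
  let w : Fin n → k := fun i => q ^ (i : ℕ)
  have hw : w ^ n = 1 := funext fun i => by simp [w, ← pow_mul, pow_mul', hq]
  have hshift : truncShift k n ^ n = 0 := by
    refine LinearMap.ext fun v => funext fun i => ?_
    simp [truncShift_pow_apply]
  have hcomm : truncShift k n * LinearMap.mulLeft k w =
      q • (LinearMap.mulLeft k w * truncShift k n) := by
    refine LinearMap.ext fun v => funext fun i => ?_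
    simp only [Module.End.mul_apply, LinearMap.smul_apply, LinearMap.mulLeft_apply,
      truncShift_apply, Pi.mul_apply, Pi.smul_apply, smul_eq_mul, w]
    split_ifs <;> ring
  let ρ := lift (A := Module.End k (Fin n → k)) (LinearMap.mulLeft k w) (truncShift k n)
    (by rw [LinearMap.pow_mulLeft, hw, LinearMap.mulLeft_one]; rfl) hshift hcomm
  intro h0
  have := congr_arg (fun a => ρ a (fun _ => 1) ⟨0, Nat.pos_of_ne_zero hn⟩) h0
  simp [ρ, truncShift_pow_apply, Nat.sub_lt (Nat.pos_of_ne_zero hn)] at this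

end TaftAlgebra

/-- The Jacobson radical of `H_n(q)` equals the ideal generated by `h`
(which is two-sided, since `Hh = hH`); moreover `J^n = 0` while `J^{n-1} ≠ 0`,
i.e. every product of `n` elements of `J` vanishes but some product of `n-1` elements
does not (so the Loewy length of `H_n(q)` is `n`). -/
theorem taft_jacobson_radical (k : Type) [Field k] (n : ℕ) (hn : 2 ≤ n) (q : k)
    (hq : IsPrimitiveRoot q n) :
    (⊥ : Ideal (TaftAlgebra k q n)).jacobson = Ideal.span {taftH k q n} ∧
    (∀ a ∈ Ideal.span {taftH k q n}, ∀ b : TaftAlgebra k q n,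
      a * b ∈ Ideal.span {taftH k q n}) ∧
    (∀ f : Fin n → TaftAlgebra k q n,
      (∀ j, f j ∈ (⊥ : Ideal (TaftAlgebra k q n)).jacobson) → (List.ofFn f).prod = 0) ∧
    (∃ f : Fin (n - 1) → TaftAlgebra k q n,
      (∀ j, f j ∈ (⊥ : Ideal (TaftAlgebra k q n)).jacobson) ∧ (List.ofFn f).prod ≠ 0) := by
  have hn0 : n ≠ 0 := by omega
  have hJ : (⊥ : Ideal (TaftAlgebra k q n)).jacobson = Ideal.span {taftH k q n} :=
    le_antisymm (TaftAlgebra.jacobson_le_span_taftH hq hn0) TaftAlgebra.span_taftH_le_jacobson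
  have hnormal := TaftAlgebra.exists_taftH_mul_eq_mul_taftH (k := k) (q := q) (n := n)
  refine ⟨hJ, fun a ha b => Ideal.mul_mem_span_singleton_of_forall_exists_mul_eq hnormal ha b,
    fun f hf => ?_, fun _ => taftH k q n, fun _ => hJ ▸ Ideal.mem_span_singleton_self _, ?_⟩
  · obtain ⟨w, hw⟩ := Ideal.exists_list_prod_eq_mul_pow_of_forall_exists_mul_eq hnormal
      (List.ofFn f) (by simpa [List.forall_mem_ofFn_iff, hJ] using hf)
    rw [hw, List.length_ofFn, TaftAlgebra.taftH_pow, mul_zero]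
  · rw [List.ofFn_const, List.prod_replicate]
    exact TaftAlgebra.taftH_pow_pred_ne_zero hn0 hq.pow_eq_one
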